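/- arXiv:1403.6170 — 2 statements merged into one kernel-verified Lean document; each statement's English description precedes it below -/
import Mathlib

section
/- Let $d_\A$ be the combinatorial covariant derivative on cochains of a finite simplicial complex with combinatorial connection $\A$. Then $d_\A \circ d_\A = 0$ if and only if the curvature $F_\A(\sigma,\eta) = \A(\eta,\tau^+)\A(\tau^+,\sigma) - \A(\eta,\tau^-)\A(\tau^-,\sigma)$ vanishes for every pair of simplices $\sigma \in K_q$, $\eta \in K_{q+2}$ with $\sigma$ a leaf of $\eta$ (i.e. $\sigma \in \partial\tau^\pm$ and $\tau^\pm \in \partial\eta$ the two intermediate simplices). -/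
/-- `σ` is a *leaf* of `η`: there is an intermediate simplex `τ` with nonzero
incidence numbers `ε₁ η τ` and `ε₀ τ σ`. -/
def IsLeaf {T0 T1 T2 : Type*} (ε1 : T2 → T1 → ℤ) (ε0 : T1 → T0 → ℤ)
    (η : T2) (σ : T0) : Prop :=
  ∃ τ, ε1 η τ ≠ 0 ∧ ε0 τ σ ≠ 0

/-- The combinatorial covariant derivative `d_α` satisfies `d_α ∘ d_α = 0` if and
only if the curvature `F_α(σ,η) = α(η,τ⁺)α(τ⁺,σ) - α(η,τ⁻)α(τ⁻,σ)` vanishes on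
every leaf `(σ, η)`. -/
theorem stmt0
    {V : Type*} [AddCommGroup V] [Module ℝ V]
    (S : ℕ → Type) [∀ q, Fintype (S q)] [∀ q, DecidableEq (S q)]
    (ε : ∀ q, S (q + 1) → S q → ℤ)
    (hε : ∀ q (τ : S (q + 1)) (σ : S q), ε q τ σ = -1 ∨ ε q τ σ = 0 ∨ ε q τ σ = 1)
    (α : ∀ q, S (q + 1) → S q → (V →ₗ[ℝ] V))
    (d : ∀ q, (S q → V) →ₗ[ℝ] (S (q + 1) → V))
    (hd : ∀ q (φ : S q → V) (τ : S (q + 1)),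
      d q φ τ = ∑ σ, (ε q τ σ : ℝ) • α q τ σ (φ σ))
    (τp τm : ∀ q, S (q + 2) → S q → S (q + 1))
    (hleaf : ∀ q (η : S (q + 2)) (σ : S q), IsLeaf (ε (q + 1)) (ε q) η σ →
      τp q η σ ≠ τm q η σ ∧
      ε (q + 1) η (τp q η σ) ≠ 0 ∧ ε q (τp q η σ) σ ≠ 0 ∧
      ε (q + 1) η (τm q η σ) ≠ 0 ∧ ε q (τm q η σ) σ ≠ 0 ∧
      (∀ τ : S (q + 1), ε (q + 1) η τ ≠ 0 → ε q τ σ ≠ 0 →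
        τ = τp q η σ ∨ τ = τm q η σ))
    (hsign : ∀ q (η : S (q + 2)) (σ : S q), IsLeaf (ε (q + 1)) (ε q) η σ →
      ε (q + 1) η (τp q η σ) * ε q (τp q η σ) σ
        + ε (q + 1) η (τm q η σ) * ε q (τm q η σ) σ = 0) :
    (∀ q, (d (q + 1)).comp (d q) = 0) ↔
      (∀ q (η : S (q + 2)) (σ : S q), IsLeaf (ε (q + 1)) (ε q) η σ →
        (α (q + 1) η (τp q η σ)).comp (α q (τp q η σ) σ)
          = (α (q + 1) η (τm q η σ)).comp (α q (τm q η σ) σ)) := by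
  -- key computation: d² of a single-supported cochain, evaluated at η
  have key : ∀ q (σ : S q) (v : V) (η : S (q + 2)),
      d (q + 1) (d q (Pi.single σ v)) η
        = ∑ τ, ((ε (q + 1) η τ * ε q τ σ : ℤ) : ℝ) •
            α (q + 1) η τ (α q τ σ v) := by
    intro q σ v η
    rw [hd]
    refine Finset.sum_congr rfl fun τ _ => ?_
    rw [hd]
    have hinner : (∑ σ', (ε q τ σ' : ℝ) • α q τ σ' ((Pi.single σ v : S q → V) σ'))
        = (ε q τ σ : ℝ) • α q τ σ v := by
      rw [Finset.sum_eq_single σ]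
      · rw [Pi.single_eq_same]
      · intro σ' _ hne
        rw [Pi.single_eq_of_ne hne, map_zero, smul_zero]
      · intro h; exact absurd (Finset.mem_univ σ) h
    rw [hinner, map_smul, smul_smul, Int.cast_mul]
  have pairred : ∀ q (η : S (q + 2)) (σ : S q),
      IsLeaf (ε (q + 1)) (ε q) η σ → ∀ v : V,
      (∑ τ, ((ε (q + 1) η τ * ε q τ σ : ℤ) : ℝ) • α (q + 1) η τ (α q τ σ v))
        = ((ε (q + 1) η (τp q η σ) * ε q (τp q η σ) σ : ℤ) : ℝ) •
            α (q + 1) η (τp q η σ) (α q (τp q η σ) σ v)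
          + ((ε (q + 1) η (τm q η σ) * ε q (τm q η σ) σ : ℤ) : ℝ) •
            α (q + 1) η (τm q η σ) (α q (τm q η σ) σ v) := by
    intro q η σ hl v
    obtain ⟨hne, _, _, _, _, huniq⟩ := hleaf q η σ hl
    rw [show (Finset.univ : Finset (S (q + 1)))
        = ({τp q η σ, τm q η σ} : Finset (S (q + 1)))
          ∪ (Finset.univ \ {τp q η σ, τm q η σ}) by
      simp [Finset.union_sdiff_of_subset]]
    rw [Finset.sum_union (Finset.disjoint_sdiff), Finset.sum_pair hne]
    have : ∑ τ ∈ Finset.univ \ {τp q η σ, τm q η σ},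
        ((ε (q + 1) η τ * ε q τ σ : ℤ) : ℝ) • α (q + 1) η τ (α q τ σ v) = 0 := by
      refine Finset.sum_eq_zero fun τ hτ => ?_
      simp only [Finset.mem_sdiff, Finset.mem_insert, Finset.mem_singleton] at hτ
      rcases eq_or_ne (ε (q + 1) η τ) 0 with h1 | h1
      · simp [h1]
      rcases eq_or_ne (ε q τ σ) 0 with h2 | h2
      · simp [h2]
      exact absurd (huniq τ h1 h2) (by tauto)
    rw [this, add_zero]
  constructor
  · -- d² = 0 → curvature vanishes
    intro h0 q η σ hl
    obtain ⟨hne, hp1, hp0, hm1, hm0, huniq⟩ := hleaf q η σ hl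
    ext v
    have h := congrFun (congrFun (congrArg DFunLike.coe (h0 q)) (Pi.single σ v)) η
    simp only [LinearMap.comp_apply, LinearMap.zero_apply, Pi.zero_apply] at h
    rw [key, pairred q η σ hl v] at h
    set a := ε (q + 1) η (τp q η σ) * ε q (τp q η σ) σ with ha
    have hm : ε (q + 1) η (τm q η σ) * ε q (τm q η σ) σ = -a := by
      have := hsign q η σ hl; omega
    rw [hm] at h
    push_cast at h
    have ha0 : (a : ℝ) ≠ 0 := by
      have : a ≠ 0 := mul_ne_zero hp1 hp0
      exact_mod_cast this
    simp only [LinearMap.comp_apply]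
    have h' : (a : ℝ) • (α (q + 1) η (τp q η σ) (α q (τp q η σ) σ v)
        - α (q + 1) η (τm q η σ) (α q (τm q η σ) σ v)) = 0 := by
      rw [smul_sub]; linear_combination (norm := module) h
    exact sub_eq_zero.mp ((smul_eq_zero.mp h').resolve_left ha0)
  · -- curvature vanishes → d² = 0
    intro hF q
    ext σ v η
    show d (q + 1) (d q (Pi.single σ v)) η = 0
    rw [key]
    rcases Classical.em (IsLeaf (ε (q + 1)) (ε q) η σ) with hl | hl
    · rw [pairred q η σ hl v]
      have hcurv := congrFun (congrArg DFunLike.coe (hF q η σ hl)) v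
      simp only [LinearMap.comp_apply] at hcurv
      set a := ε (q + 1) η (τp q η σ) * ε q (τp q η σ) σ with ha
      have hm : ε (q + 1) η (τm q η σ) * ε q (τm q η σ) σ = -a := by
        have := hsign q η σ hl; omega
      rw [hm, hcurv]
      push_cast
      module
    · refine Finset.sum_eq_zero fun τ _ => ?_
      rcases eq_or_ne (ε (q + 1) η τ) 0 with h1 | h1
      · simp [h1]
      rcases eq_or_ne (ε q τ σ) 0 with h2 | h2
      · simp [h2]
      exact absurd ⟨τ, h1, h2⟩ hl
end

section
/- Let $V$ be a finite dimensional real inner product space with a symmetric positive definite operator $A$. Then the function $f(\phi) = e^{-\frac{1}{2}\langle A\phi,\phi\rangle}$ is integrable on $V$ with $\int_V f\,d\phi = (2\pi)^{\dim V/2}(\det A)^{-1/2}$, and consequently the norm of the partition function satisfies $\|Z_{K,L}\|^2_{H(L)} = Z_{\widetilde K,\varnothing}$, where $\widetilde K = K\cup_L K$ is the double of $K$ along $L$: explicitly, $\int_{C^0(L,E)} Z_{K,L}(\eta)^2 e^{-S_L(\eta)}\,d\eta = \int_{C^0(\widetilde K,E)} e^{-S_{\widetilde K}(\phi)}\,d\phi$.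 -/
open Matrix MeasureTheory
open scoped MatrixOrder

/-! Writing the positive definite `A` as `Bᵀ B` with `B` invertible turns `⟨Aφ, φ⟩` into `|Bφ|²`,
so the linear substitution `ψ = Bφ` reduces the integral to the standard Gaussian
`∏ᵢ e^{-ψᵢ²/2}`, with Jacobian `|det B|⁻¹ = (det A)^{-1/2}`.
The gluing formula is Fubini: by the decomposition of the action on the double, `e^{-S_{K̃}}`
factors as `e^{-S_{K,L}(φ⁺, η)} e^{-S_{K,L}(φ⁻, η)} e^{-S_L(η)}`, and integrating out `φ⁺, φ⁻`
at fixed `η` produces `Z_{K,L}(η)²`. -/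

section ChangeOfVariables

variable {E F : Type*} [NormedAddCommGroup E] [NormedSpace ℝ E] [MeasurableSpace E] [BorelSpace E]
  [FiniteDimensional ℝ E] [NormedAddCommGroup F]
  (μ : Measure E) [μ.IsAddHaarMeasure] {f : E →ₗ[ℝ] E}

theorem measurableEmbedding_linearMap_of_det_ne_zero (hf : LinearMap.det f ≠ 0) :
    MeasurableEmbedding f :=
  (f.equivOfDetNeZero hf).toContinuousLinearEquiv.toHomeomorph.measurableEmbedding

theorem integrable_comp_linearMap_iff (hf : LinearMap.det f ≠ 0) {g : E → F} :
    Integrable (g ∘ f) μ ↔ Integrable g μ := by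
  rw [← (measurableEmbedding_linearMap_of_det_ne_zero hf).integrable_map_iff,
    Measure.map_linearMap_addHaar_eq_smul_addHaar μ hf,
    integrable_smul_measure (by simpa using hf) ENNReal.ofReal_ne_top]

theorem integral_comp_linearMap [NormedSpace ℝ F] (hf : LinearMap.det f ≠ 0) (g : E → F) :
    ∫ x, g (f x) ∂μ = |(LinearMap.det f)⁻¹| • ∫ x, g x ∂μ := by
  rw [← (measurableEmbedding_linearMap_of_det_ne_zero hf).integral_map,
    Measure.map_linearMap_addHaar_eq_smul_addHaar μ hf, integral_smul_measure,
    ENNReal.toReal_ofReal (abs_nonneg _)]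

end ChangeOfVariables

section StandardGaussian

variable {ι : Type*} [Fintype ι]

theorem exp_neg_half_dotProduct_self (ψ : ι → ℝ) :
    Real.exp (-(1 / 2 * (ψ ⬝ᵥ ψ))) = ∏ i, Real.exp (-(1 / 2) * ψ i ^ 2) := by
  rw [← Real.exp_sum, dotProduct, Finset.mul_sum, ← Finset.sum_neg_distrib]
  simp only [neg_mul, sq]

theorem integrable_exp_neg_half_dotProduct_self :
    Integrable (fun ψ : ι → ℝ => Real.exp (-(1 / 2 * (ψ ⬝ᵥ ψ)))) := by
  simp only [exp_neg_half_dotProduct_self]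
  exact Integrable.fintype_prod fun _ => integrable_exp_neg_mul_sq one_half_pos

theorem integral_exp_neg_half_dotProduct_self :
    ∫ ψ : ι → ℝ, Real.exp (-(1 / 2 * (ψ ⬝ᵥ ψ))) = Real.sqrt ((2 * Real.pi) ^ Fintype.card ι) := by
  simp only [exp_neg_half_dotProduct_self]
  rw [volume_pi, integral_fintype_prod_eq_pow (fun x : ℝ => Real.exp (-(1 / 2) * x ^ 2)),
    integral_gaussian, show Real.pi / (1 / 2) = 2 * Real.pi by ring]
  have h2π : 0 ≤ 2 * Real.pi := by positivity
  rw [Real.sqrt_eq_rpow, Real.sqrt_eq_rpow, ← Real.rpow_natCast, ← Real.rpow_natCast,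
    ← Real.rpow_mul h2π, ← Real.rpow_mul h2π, mul_comm (1 / 2 : ℝ)]

end StandardGaussian

namespace Matrix

variable {ι : Type*} [Fintype ι]

theorem transpose_mul_self_mulVec_dotProduct {m : Type*} [Fintype m] (B : Matrix m ι ℝ)
    (φ : ι → ℝ) : (Bᵀ * B) *ᵥ φ ⬝ᵥ φ = B *ᵥ φ ⬝ᵥ B *ᵥ φ := by
  rw [← mulVec_mulVec, dotProduct_comm, dotProduct_mulVec, vecMul_transpose]

variable [DecidableEq ι]

theorem PosDef.exists_det_ne_zero_and_eq_transpose_mul_self {A : Matrix ι ι ℝ}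
    (hA : A.PosDef) : ∃ B : Matrix ι ι ℝ, B.det ≠ 0 ∧ A = Bᵀ * B := by
  obtain ⟨B, hB⟩ := CStarAlgebra.nonneg_iff_eq_star_mul_self.mp hA.posSemidef.nonneg
  rw [star_eq_conjTranspose, conjTranspose_eq_transpose_of_trivial] at hB
  refine ⟨B, fun hdet => hA.det_pos.ne' ?_, hB⟩
  rw [hB, det_mul, det_transpose, hdet, mul_zero]

variable {B : Matrix ι ι ℝ}

theorem integrable_exp_neg_half_transpose_mul_self (hB : B.det ≠ 0) :
    Integrable (fun φ : ι → ℝ => Real.exp (-(1 / 2 * ((Bᵀ * B) *ᵥ φ ⬝ᵥ φ)))) := by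
  have hdet : LinearMap.det (toLin' B) ≠ 0 := by rwa [LinearMap.det_toLin']
  simp only [transpose_mul_self_mulVec_dotProduct]
  exact (integrable_comp_linearMap_iff volume hdet).mpr integrable_exp_neg_half_dotProduct_self

theorem integral_exp_neg_half_transpose_mul_self (hB : B.det ≠ 0) :
    ∫ φ : ι → ℝ, Real.exp (-(1 / 2 * ((Bᵀ * B) *ᵥ φ ⬝ᵥ φ)))
      = Real.sqrt ((2 * Real.pi) ^ Fintype.card ι / (Bᵀ * B).det) := by
  have hdet : LinearMap.det (toLin' B) ≠ 0 := by rwa [LinearMap.det_toLin']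
  have hsubst := integral_comp_linearMap volume hdet fun ψ => Real.exp (-(1 / 2 * (ψ ⬝ᵥ ψ)))
  simp only [toLin'_apply] at hsubst
  simp only [transpose_mul_self_mulVec_dotProduct]
  rw [hsubst, integral_exp_neg_half_dotProduct_self, LinearMap.det_toLin', det_mul, det_transpose,
    Real.sqrt_div' _ (mul_self_nonneg _), Real.sqrt_mul_self_eq_abs, abs_inv, smul_eq_mul,
    div_eq_inv_mul]

theorem PosDef.integrable_exp_neg_half_mulVec_dotProduct {A : Matrix ι ι ℝ} (hA : A.PosDef) :
    Integrable (fun φ : ι → ℝ => Real.exp (-(1 / 2 * (A *ᵥ φ ⬝ᵥ φ)))) := by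
  obtain ⟨B, hB, rfl⟩ := hA.exists_det_ne_zero_and_eq_transpose_mul_self
  exact integrable_exp_neg_half_transpose_mul_self hB

theorem PosDef.integral_exp_neg_half_mulVec_dotProduct {A : Matrix ι ι ℝ} (hA : A.PosDef) :
    ∫ φ : ι → ℝ, Real.exp (-(1 / 2 * (A *ᵥ φ ⬝ᵥ φ)))
      = Real.sqrt ((2 * Real.pi) ^ Fintype.card ι / A.det) := by
  obtain ⟨B, hB, rfl⟩ := hA.exists_det_ne_zero_and_eq_transpose_mul_self
  exact integral_exp_neg_half_transpose_mul_self hB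

end Matrix

theorem integral_sq_integral_mul_eq_integral_prod {X Y : Type*} [MeasurableSpace X]
    [MeasurableSpace Y] {μ : Measure X} {ν : Measure Y} [SigmaFinite μ] [SigmaFinite ν]
    (f : X → Y → ℝ) (w : Y → ℝ)
    (hint : Integrable (fun p : (X × X) × Y => f p.1.1 p.2 * f p.1.2 p.2 * w p.2)
      ((μ.prod μ).prod ν)) :
    ∫ y, (∫ x, f x y ∂μ) ^ 2 * w y ∂ν
      = ∫ p, f p.1.1 p.2 * f p.1.2 p.2 * w p.2 ∂((μ.prod μ).prod ν) := by
  rw [integral_prod _ hint, integral_integral_swap hint]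
  refine integral_congr_ae (Filter.Eventually.of_forall fun y => ?_)
  simp only [integral_mul_const, sq, integral_prod_mul (f · y) (f · y)]

/-- (i) For a symmetric positive definite `A`, the Gaussian `e^{-½⟨Aφ,φ⟩}` is
integrable with `∫ e^{-½⟨Aφ,φ⟩} dφ = (2π)^{dim V/2}(det A)^{-1/2}`; and
(ii) consequently, if the action on the double `K̃ = K ∪_L K` decomposes as
`S_{K̃}(φ⁺,φ⁻,η) = S_{K,L}(φ⁺;η) + S_{K,L}(φ⁻;η) + S_L(η)` for matching boundary
trace `η`, then `‖Z_{K,L}‖²_{H(L)} = Z_{K̃,∅}`: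
`∫ Z_{K,L}(η)² e^{-S_L(η)} dη = ∫ e^{-S_{K̃}(φ)} dφ`. -/
theorem stmt17 {ι ι0 ιL : Type*} [Fintype ι] [Fintype ι0] [Fintype ιL]
    [DecidableEq ι]
    (A : Matrix ι ι ℝ) (hA : A.PosDef)
    (SKL : (ι0 → ℝ) → (ιL → ℝ) → ℝ) (SL : (ιL → ℝ) → ℝ)
    (Sdbl : ((ι0 → ℝ) × (ι0 → ℝ)) × (ιL → ℝ) → ℝ)
    (hdbl : ∀ (φp φm : ι0 → ℝ) (η : ιL → ℝ),
      Sdbl ((φp, φm), η) = SKL φp η + SKL φm η + SL η)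
    (hint : Integrable
      (fun p : ((ι0 → ℝ) × (ι0 → ℝ)) × (ιL → ℝ) => Real.exp (-(Sdbl p)))) :
    (Integrable (fun φ : ι → ℝ => Real.exp (-((1 / 2) * (A.mulVec φ ⬝ᵥ φ)))) ∧
      ∫ φ : ι → ℝ, Real.exp (-((1 / 2) * (A.mulVec φ ⬝ᵥ φ)))
        = Real.sqrt ((2 * Real.pi) ^ Fintype.card ι / A.det)) ∧
    ∫ η : ιL → ℝ, (∫ φ : ι0 → ℝ, Real.exp (-(SKL φ η))) ^ 2 * Real.exp (-(SL η))
      = ∫ p : ((ι0 → ℝ) × (ι0 → ℝ)) × (ιL → ℝ), Real.exp (-(Sdbl p)) := by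
  have hsplit : (fun p => Real.exp (-(Sdbl p))) = fun p =>
      Real.exp (-(SKL p.1.1 p.2)) * Real.exp (-(SKL p.1.2 p.2)) * Real.exp (-(SL p.2)) := by
    funext ⟨⟨φp, φm⟩, η⟩
    rw [hdbl, ← Real.exp_add, ← Real.exp_add]
    ring_nf
  rw [hsplit] at hint
  refine ⟨⟨hA.integrable_exp_neg_half_mulVec_dotProduct,
    hA.integral_exp_neg_half_mulVec_dotProduct⟩, ?_⟩
  rw [hsplit]
  exact integral_sq_integral_mul_eq_integral_prod (fun φ η => Real.exp (-(SKL φ η)))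
    (fun η => Real.exp (-(SL η))) hint
end
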